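/- arXiv:1710.07429 — 2 statements merged into one kernel-verified Lean document; each statement's English description precedes it below -/
import Mathlib

section
/- Let f_t(x) = 1{a·x > t} be a halfspace on {-1,1}^n with a ∈ ℝ_{≥0}^n and t ≥ 0. Let ε = Pr[a·x > t] and let β ≥ 0 be minimal such that Pr[a·x > t+β] ≤ ε/3. If a_i > β/2 for some coordinate i, then the influence I_i(f_t) ≥ (2/3)·ε. -/
open Finset

noncomputable section
open scoped Classical

/-- The ±1 value associated to a Boolean bit. -/
def sgn1 (b : Bool) : ℝ := if b then 1 else -1

/-- Probability of an event under the uniform measure on `{-1,1}^n`. -/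
def cubePr (n : ℕ) (P : (Fin n → Bool) → Prop) : ℝ :=
  ((univ.filter P).card : ℝ) / 2 ^ n

/-- Expectation of a function under the uniform measure on `{-1,1}^n`. -/
def cubeE (n : ℕ) (f : (Fin n → Bool) → ℝ) : ℝ := (∑ x, f x) / 2 ^ n

/-- The linear form `a · x = ∑ aᵢ xᵢ` on `{-1,1}^n`. -/
def lin (n : ℕ) (a : Fin n → ℝ) (x : Fin n → Bool) : ℝ := ∑ i, a i * sgn1 (x i)

/-- The halfspace `1{a · x > t}` as a 0/1-valued function. -/
def halfspace (n : ℕ) (a : Fin n → ℝ) (t : ℝ) (x : Fin n → Bool) : ℝ :=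
  if t < lin n a x then 1 else 0

/-- The influence of coordinate `i` on `f`: the probability that flipping
coordinate `i` changes the value of `f`. -/
def infl (n : ℕ) (i : Fin n) (f : (Fin n → Bool) → ℝ) : ℝ :=
  cubePr n (fun x => f x ≠ f (Function.update x i (!x i)))

/-- The degree-1 Fourier coefficient `f̂({i}) = E[f(x)·xᵢ]`. -/
def fCoeff (n : ℕ) (f : (Fin n → Bool) → ℝ) (i : Fin n) : ℝ :=
  cubeE n (fun x => f x * sgn1 (x i))

/-- The degree-1 Fourier weight `W¹(f) = ∑ᵢ f̂({i})²`. -/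
def W1 (n : ℕ) (f : (Fin n → Bool) → ℝ) : ℝ := ∑ i, (fCoeff n f i) ^ 2

/-!
Let `σ` flip the `i`-th coordinate, so `a·σx = a·x ∓ 2aᵢ`. A point `x` with `a·x > t` either has
`a·σx ≤ t`, and since `σ` swaps these points with those where `a·x ≤ t < a·σx`, they have
probability `Iᵢ/2`; or `a·σx > t` as well, and then the larger of `a·x`, `a·σx` exceeds
`t + 2aᵢ > t + β`, so these points have probability at most `2·Pr[a·x > t+β] ≤ 2ε/3`.
Hence `ε ≤ 2ε/3 + Iᵢ/2`.
-/

section Involution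

variable {α : Type*} [Fintype α] {σ : α → α}

theorem Function.Involutive.card_filter_not_iff_comp (hσ : Function.Involutive σ)
    (P : α → Prop) :
    #{x | ¬(P x ↔ P (σ x))} = 2 * #{x | P x ∧ ¬P (σ x)} := by
  have hswap : #{x | ¬P x ∧ P (σ x)} = #{x | P x ∧ ¬P (σ x)} :=
    card_nbij' σ σ (fun x hx => by simp_all [hσ x]) (fun x hx => by simp_all [hσ x])
      (fun x _ => hσ x) (fun x _ => hσ x)
  have hsplit : univ.filter (fun x => ¬(P x ↔ P (σ x))) =
      univ.filter (fun x => P x ∧ ¬P (σ x)) ∪ univ.filter (fun x => ¬P x ∧ P (σ x)) := by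
    ext x
    simp only [mem_filter, mem_univ, true_and, mem_union]
    tauto
  rw [hsplit, card_union_of_disjoint (disjoint_filter.2 fun x _ h h' => h'.1 h.1), hswap,
    two_mul]

theorem Function.Involutive.card_filter_le_two_mul (hσ : Function.Involutive σ)
    {P Q : α → Prop} (h : ∀ x, P x → Q x ∨ Q (σ x)) :
    #{x | P x} ≤ 2 * #{x | Q x} := by
  have hsub : univ.filter P ⊆ univ.filter Q ∪ (univ.filter Q).image σ := by
    intro x hx
    rcases h x (mem_filter.1 hx).2 with hQ | hQ
    · exact mem_union_left _ (mem_filter.2 ⟨mem_univ x, hQ⟩)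
    · exact mem_union_right _ (mem_image.2 ⟨σ x, mem_filter.2 ⟨mem_univ _, hQ⟩, hσ x⟩)
  calc #{x | P x} ≤ #(univ.filter Q ∪ (univ.filter Q).image σ) := card_le_card hsub
    _ ≤ #{x | Q x} + #((univ.filter Q).image σ) := card_union_le _ _
    _ ≤ 2 * #{x | Q x} := by rw [two_mul]; exact Nat.add_le_add_left card_image_le _

end Involution

section Cube

variable {n : ℕ} {σ : (Fin n → Bool) → (Fin n → Bool)}

theorem cubePr_mono {P Q : (Fin n → Bool) → Prop} (h : ∀ x, P x → Q x) :
    cubePr n P ≤ cubePr n Q := by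
  unfold cubePr
  gcongr
  exact h _

theorem Function.Involutive.cubePr_eq (hσ : Function.Involutive σ) (P : (Fin n → Bool) → Prop) :
    cubePr n P = cubePr n (fun x => P x ∧ P (σ x)) + cubePr n (fun x => ¬(P x ↔ P (σ x))) / 2 := by
  have hcard : #{x | P x} = #{x | P x ∧ P (σ x)} + #{x | P x ∧ ¬P (σ x)} := by
    rw [← card_filter_add_card_filter_not (s := {x | P x}) (p := fun x => P (σ x)),
      filter_filter, filter_filter]
  have hdiv : (#{x | P x} : ℝ) / 2 ^ n =
      #{x | P x ∧ P (σ x)} / 2 ^ n + (#{x | ¬(P x ↔ P (σ x))} : ℝ) / 2 ^ n / 2 := by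
    rw [hσ.card_filter_not_iff_comp P, hcard]
    push_cast
    ring
  unfold cubePr
  convert hdiv

theorem Function.Involutive.cubePr_le_two_mul (hσ : Function.Involutive σ)
    {P Q : (Fin n → Bool) → Prop} (h : ∀ x, P x → Q x ∨ Q (σ x)) :
    cubePr n P ≤ 2 * cubePr n Q := by
  unfold cubePr
  rw [← mul_div_assoc]
  gcongr
  exact_mod_cast hσ.card_filter_le_two_mul h

end Cube

section Halfspace

variable {n : ℕ}

/-- The point `x ⊕ eᵢ`. -/
def flipAt (i : Fin n) (x : Fin n → Bool) : Fin n → Bool := Function.update x i (!x i)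

theorem flipAt_involutive (i : Fin n) : Function.Involutive (flipAt i) := by
  intro x
  ext j
  by_cases h : j = i
  · subst h; simp [flipAt]
  · simp [flipAt, Function.update_of_ne h]

theorem lin_flipAt (a : Fin n → ℝ) (i : Fin n) (x : Fin n → Bool) :
    lin n a (flipAt i x) = lin n a x - 2 * a i * sgn1 (x i) := by
  have hsum := Finset.add_sum_erase univ (fun j => a j * sgn1 (flipAt i x j)) (mem_univ i)
  have hsum' := Finset.add_sum_erase univ (fun j => a j * sgn1 (x j)) (mem_univ i)
  have hrest : ∑ j ∈ univ.erase i, a j * sgn1 (flipAt i x j) =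
      ∑ j ∈ univ.erase i, a j * sgn1 (x j) :=
    sum_congr rfl fun j hj => by rw [flipAt, Function.update_of_ne (ne_of_mem_erase hj)]
  rw [lin, lin, ← hsum, ← hsum', hrest, flipAt, Function.update_self]
  cases x i <;> simp only [sgn1] <;> norm_num <;> ring

theorem lt_lin_or_lt_lin_flipAt {a : Fin n → ℝ} {t : ℝ} {i : Fin n} {x : Fin n → Bool}
    (hx : t < lin n a x) (hfx : t < lin n a (flipAt i x)) :
    t + 2 * a i < lin n a x ∨ t + 2 * a i < lin n a (flipAt i x) := by
  rw [lin_flipAt] at hfx ⊢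
  cases hxi : x i <;> simp only [sgn1, hxi, Bool.false_eq_true, if_true, if_false] at hfx ⊢
  · right; linarith
  · left; linarith

theorem infl_halfspace (a : Fin n → ℝ) (t : ℝ) (i : Fin n) :
    infl n i (halfspace n a t) =
      cubePr n (fun x => ¬(t < lin n a x ↔ t < lin n a (flipAt i x))) := by
  unfold infl
  congr 1
  ext x
  by_cases h₁ : t < lin n a x <;> by_cases h₂ : t < lin n a (flipAt i x) <;>
    simp only [halfspace, flipAt] at * <;> simp [h₁, h₂]

end Halfspace

theorem influence_of_big_coordinate_general (n : ℕ) (a : Fin n → ℝ) (t ε β : ℝ) (i : Fin n)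
    (hε : ε = cubePr n (fun x => t < lin n a x))
    (hβ : IsLeast {b : ℝ | 0 ≤ b ∧ cubePr n (fun x => t + b < lin n a x) ≤ ε / 3} β)
    (hai : β / 2 < a i) :
    (2 / 3) * ε ≤ infl n i (halfspace n a t) := by
  have hflip := flipAt_involutive i
  have hsplit : ε = cubePr n (fun x => t < lin n a x ∧ t < lin n a (flipAt i x)) +
      infl n i (halfspace n a t) / 2 := by
    rw [hε, infl_halfspace]
    exact hflip.cubePr_eq _
  have hboth : cubePr n (fun x => t < lin n a x ∧ t < lin n a (flipAt i x)) ≤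
      2 * cubePr n (fun x => t + 2 * a i < lin n a x) :=
    hflip.cubePr_le_two_mul fun x hx => lt_lin_or_lt_lin_flipAt hx.1 hx.2
  have hfar : cubePr n (fun x => t + 2 * a i < lin n a x) ≤
      cubePr n (fun x => t + β < lin n a x) :=
    cubePr_mono fun x hx => by linarith
  linarith [hβ.1.2]

/-- **Large coordinates have large influence.** For a halfspace `1{a·x > t}` with
`a ≥ 0`, `t ≥ 0`, `ε = Pr[a·x > t]`, and `β ≥ 0` minimal with
`Pr[a·x > t+β] ≤ ε/3`: if `aᵢ > β/2` then `Iᵢ(f_t) ≥ (2/3)·ε`. -/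
theorem influence_of_big_coordinate (n : ℕ) (a : Fin n → ℝ) (t ε β : ℝ) (i : Fin n)
    (ha : ∀ j, 0 ≤ a j) (ht : 0 ≤ t)
    (hε : ε = cubePr n (fun x => t < lin n a x))
    (hβ : IsLeast {b : ℝ | 0 ≤ b ∧ cubePr n (fun x => t + b < lin n a x) ≤ ε / 3} β)
    (hai : β / 2 < a i) :
    (2 / 3) * ε ≤ infl n i (halfspace n a t) :=
  influence_of_big_coordinate_general n a t ε β i hε hβ hai

end
end

section
/- Let f_s(x) = 1{a·x > s} be a halfspace with a ∈ ℝ_{≥0}^n and a fixed coordinate i. For δ > 0 define e_i^δ = E_{s ~ U(0,δ)}[I_i(f_{t+s})]. Then e_i^δ ≥ (a_i/δ)·Pr[a·x ∈ [t+a_i, t+δ-a_i]]. -/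
open Finset

noncomputable section
open scoped Classical

/-! The window of thresholds `s` at which flipping coordinate `i` changes `1{a·x > t + s}` is an
interval of length `2|aᵢ|` with endpoint `a·x - t`. When `a·x ∈ [t + aᵢ, t + δ - aᵢ]` that endpoint
lies at distance at least `aᵢ` from both ends of `(0, δ)`, so the window meets `(0, δ)` in a set of
length at least `aᵢ`. Averaging over `x` (Fubini for a finite sum) gives the bound. -/

open MeasureTheory

lemma sgn1_not (b : Bool) : sgn1 (!b) = -sgn1 b := by
  cases b <;> simp [sgn1]

lemma abs_sgn1 (b : Bool) : |sgn1 b| = 1 := by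
  cases b <;> simp [sgn1]

lemma lin_update (n : ℕ) (a : Fin n → ℝ) (x : Fin n → Bool) (i : Fin n) (b : Bool) :
    lin n a (Function.update x i b) = lin n a x + a i * (sgn1 b - sgn1 (x i)) := by
  unfold lin
  rw [← add_sum_erase _ _ (mem_univ i), ← add_sum_erase _ _ (mem_univ i),
    sum_congr rfl fun j hj => by rw [Function.update_of_ne (ne_of_mem_erase hj)],
    Function.update_self]
  ring

lemma abs_lin_sub_lin_update_not (n : ℕ) (a : Fin n → ℝ) (x : Fin n → Bool) (i : Fin n) :
    |lin n a x - lin n a (Function.update x i (!x i))| = 2 * |a i| := by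
  rw [lin_update, sgn1_not, sub_add_cancel_left, abs_neg, abs_mul, ← neg_add', ← two_mul, abs_neg,
    abs_mul, abs_sgn1, abs_two, mul_one, mul_comm]

lemma halfspace_add_ne_iff (n : ℕ) (a : Fin n → ℝ) (t s : ℝ) (x y : Fin n → Bool) :
    halfspace n a (t + s) x ≠ halfspace n a (t + s) y ↔
      s ∈ Set.Ico (min (lin n a x - t) (lin n a y - t)) (max (lin n a x - t) (lin n a y - t)) := by
  simp only [Set.mem_Ico, min_le_iff, lt_max_iff, sub_le_iff_le_add', lt_sub_iff_add_lt',
    halfspace]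
  split_ifs <;> grind

lemma cubePr_eq_cubeE (n : ℕ) (P : (Fin n → Bool) → Prop) :
    cubePr n P = cubeE n (fun x => if P x then 1 else 0) := by
  rw [cubePr, cubeE, card_filter]
  push_cast
  rfl

lemma const_mul_cubePr_le_cubeE (n : ℕ) (P : (Fin n → Bool) → Prop) (f : (Fin n → Bool) → ℝ)
    (c : ℝ) (hf : ∀ x, 0 ≤ f x) (hPf : ∀ x, P x → c ≤ f x) :
    c * cubePr n P ≤ cubeE n f := by
  rw [cubePr_eq_cubeE, cubeE, cubeE, mul_div_assoc', mul_sum]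
  gcongr with x
  split_ifs with hx
  · simpa using hPf x hx
  · simpa using hf x

lemma integral_cubePr_mem {α : Type*} [MeasurableSpace α] (μ : Measure α) [IsFiniteMeasure μ]
    (n : ℕ) (E : (Fin n → Bool) → Set α) (hE : ∀ x, MeasurableSet (E x)) :
    ∫ s, cubePr n (fun x => s ∈ E x) ∂μ = cubeE n (fun x => μ.real (E x)) := by
  have hind : ∀ s, cubePr n (fun x => s ∈ E x) = cubeE n (fun x => (E x).indicator 1 s) := by
    intro s
    rw [cubePr_eq_cubeE]
    simp [Set.indicator_apply]
  simp only [hind, cubeE]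
  rw [integral_div, integral_finsetSum _ fun x _ => (integrable_const 1).indicator (hE x)]
  simp only [integral_indicator_one (hE _)]

lemma le_volume_real_Ico_inter_Ioo {c δ p q : ℝ} (hp : p ∈ Set.Icc c (δ - c))
    (hpq : c ≤ |p - q|) :
    c ≤ volume.real (Set.Ico (min p q) (max p q) ∩ Set.Ioo 0 δ) := by
  obtain ⟨hcp, hpδ⟩ := hp
  have of_subset : ∀ l r, r - l = c → Set.Ioo l r ⊆ Set.Ico (min p q) (max p q) ∩ Set.Ioo 0 δ →
      c ≤ volume.real (Set.Ico (min p q) (max p q) ∩ Set.Ioo 0 δ) := fun l r hlr hsub =>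
    calc c ≤ max (r - l) 0 := hlr ▸ le_max_left _ _
      _ = volume.real (Set.Ioo l r) := Real.volume_real_Ioo.symm
      _ ≤ _ := measureReal_mono hsub (measure_inter_ne_top_of_right_ne_top measure_Ioo_lt_top.ne)
  rcases le_total q p with hqp | hpq'
  · rw [abs_of_nonneg (sub_nonneg.2 hqp)] at hpq
    refine of_subset (p - c) p (by ring) fun s hs => ⟨⟨?_, ?_⟩, ?_, ?_⟩ <;>
      simp only [Set.mem_Ioo, min_eq_right hqp, max_eq_left hqp] at hs ⊢ <;> linarith [hs.1, hs.2]
  · rw [abs_of_nonpos (sub_nonpos.2 hpq')] at hpq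
    refine of_subset p (p + c) (by ring) fun s hs => ⟨⟨?_, ?_⟩, ?_, ?_⟩ <;>
      simp only [Set.mem_Ioo, min_eq_left hpq', max_eq_right hpq'] at hs ⊢ <;> linarith [hs.1, hs.2]

theorem smoothed_influence_lower_bound_general (n : ℕ) (a : Fin n → ℝ) (t δ : ℝ) (i : Fin n)
    (hδ : 0 < δ) :
    (a i / δ) * cubePr n (fun x => lin n a x ∈ Set.Icc (t + a i) (t + δ - a i)) ≤
      (∫ s in Set.Ioo (0 : ℝ) δ, infl n i (halfspace n a (t + s))) / δ := by
  simp only [infl, halfspace_add_ne_iff]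
  rw [integral_cubePr_mem _ _ _ fun x => measurableSet_Ico, div_mul_eq_mul_div]
  refine div_le_div_of_nonneg_right (const_mul_cubePr_le_cubeE _ _ _ _
    (fun x => measureReal_nonneg) fun x hx => ?_) hδ.le
  rw [measureReal_restrict_apply measurableSet_Ico]
  refine le_volume_real_Ico_inter_Ioo ⟨by linarith [hx.1], by linarith [hx.2]⟩ ?_
  rw [sub_sub_sub_cancel_right, abs_lin_sub_lin_update_not]
  linarith [le_abs_self (a i), abs_nonneg (a i)]

/-- **Lower bound on the smoothed influence.** For a halfspace family
`f_s = 1{a·x > s}` with `a ≥ 0` and `δ > 0`, the averaged influence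
`e_i^δ = E_{s~U(0,δ)}[Iᵢ(f_{t+s})]` satisfies
`e_i^δ ≥ (aᵢ/δ)·Pr[a·x ∈ [t+aᵢ, t+δ-aᵢ]]`. -/
theorem smoothed_influence_lower_bound (n : ℕ) (a : Fin n → ℝ) (t δ : ℝ) (i : Fin n)
    (ha : ∀ j, 0 ≤ a j) (hδ : 0 < δ) :
    (a i / δ) * cubePr n (fun x => lin n a x ∈ Set.Icc (t + a i) (t + δ - a i)) ≤
      (∫ s in Set.Ioo (0 : ℝ) δ, infl n i (halfspace n a (t + s))) / δ :=
  smoothed_influence_lower_bound_general n a t δ i hδ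
end
end
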